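/- For any bijection f : O → O with lifted map F, any ground action a applicable in an HL state s, the lifted map commutes with the successor function: succ(F(s), F(a)) equals the image under F of succ(s, a), i.e. succ(F(s), F(a)) = {F(t) : t ∈ succ(s, a)}. -/

import Mathlib

namespace Bison

/-- A fact is a predicate symbol together with a list of objects of the
predicate's arity. -/
def HLFact (P O : Type*) (ar : P → ℕ) : Type _ := (p : P) × (Fin (ar p) → O)

/-- An HL state is a set of facts. -/
abbrev HLState (P O : Type*) (ar : P → ℕ) := Set (HLFact P O ar)

variable {P O : Type*} {ar : P → ℕ}

/-- The lifted map of a bijection `f : O ≃ O` on facts. -/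
def liftFact (f : O ≃ O) (φ : HLFact P O ar) : HLFact P O ar :=
  ⟨φ.1, fun i => f (φ.2 i)⟩

/-- The lifted map of a bijection `f : O ≃ O` on states. -/
def liftState (f : O ≃ O) (s : HLState P O ar) : HLState P O ar :=
  liftFact f '' s

/-- A ground action: a precondition and finitely many nondeterministic
outcomes, each with add and delete effects. -/
structure GroundAction (P O : Type*) (ar : P → ℕ) where
  pre : Set (HLFact P O ar)
  n : ℕ
  add : Fin n → Set (HLFact P O ar)
  del : Fin n → Set (HLFact P O ar)

/-- `a` is applicable in `s` if `pre(a) ⊆ s`. -/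
def Applicable (a : GroundAction P O ar) (s : HLState P O ar) : Prop :=
  a.pre ⊆ s

/-- The successor states: `succ(s, a) = {(s \ del_i(a)) ∪ add_i(a) : i}`. -/
def succs (s : HLState P O ar) (a : GroundAction P O ar) :
    Set (HLState P O ar) :=
  { t | ∃ i : Fin a.n, t = (s \ a.del i) ∪ a.add i }

/-- The lifted map of a bijection `f : O ≃ O` on ground actions. -/
def liftAction (f : O ≃ O) (a : GroundAction P O ar) : GroundAction P O ar where
  pre := liftState f a.pre
  n := a.n
  add := fun i => liftState f (a.add i)
  del := fun i => liftState f (a.del i)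

theorem liftFact_injective (f : O ≃ O) :
    Function.Injective (liftFact (P := P) (ar := ar) f) :=
  Function.LeftInverse.injective (g := liftFact f.symm) fun φ =>
    congrArg (Sigma.mk φ.1) (funext fun i => f.symm_apply_apply (φ.2 i))

theorem liftState_diff_union (f : O ≃ O) (s d t : HLState P O ar) :
    liftState f ((s \ d) ∪ t) = (liftState f s \ liftState f d) ∪ liftState f t := by
  rw [liftState, Set.image_union, Set.image_sdiff (liftFact_injective f)]
  rfl

theorem succs_eq_range (s : HLState P O ar) (a : GroundAction P O ar) :
    succs s a = Set.range fun i => (s \ a.del i) ∪ a.add i := by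
  ext t
  simp [succs, eq_comm]

theorem succs_lift_general (f : O ≃ O) (a : GroundAction P O ar) (s : HLState P O ar) :
    succs (liftState f s) (liftAction f a) = liftState f '' succs s a := by
  rw [succs_eq_range, succs_eq_range, ← Set.range_comp]
  congr 1
  funext i
  exact (liftState_diff_union f s (a.del i) (a.add i)).symm

/-- The lifted map commutes with the successor function:
`succ(F(s), F(a)) = {F(t) : t ∈ succ(s, a)}`. -/
theorem succs_lift (f : O ≃ O) (a : GroundAction P O ar) (s : HLState P O ar)
    (happ : Applicable a s) :
    succs (liftState f s) (liftAction f a) = liftState f '' succs s a :=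
  succs_lift_general f a s

end Bison
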